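/- arXiv:2305.17236 — 2 statements merged into one kernel-verified Lean document; each statement's English description precedes it below -/
import Mathlib

section
/- Let C be a preadditive monoidal category in which tensoring is additive in each variable (`MonoidalPreadditive`). Let A, B, P be monoid objects in C and let p : P ⟶ A and q : P ⟶ B be morphisms of monoid objects whose underlying morphisms in C exhibit the underlying object of P as a binary biproduct of the underlying objects of A and B (i.e. there are morphisms i : A ⟶ P and j : B ⟶ P in C satisfying the biproduct identities i ≫ p = 𝟙, j ≫ q = 𝟙, i ≫ q = 0, j ≫ p = 0, p ≫ i + q ≫ j = 𝟙). Then P is separable if and only if both A and B are separable. -/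
open CategoryTheory MonoidalCategory

/-- A monoid object `A` in a monoidal category is *separable* if its multiplication
`μ : A ⊗ A ⟶ A` admits a section `σ : A ⟶ A ⊗ A` which is a morphism of
`A`-bimodule objects from `A` to the free bimodule `A ⊗ A`. -/
def Mon_.IsSeparable {C : Type*} [Category C] [MonoidalCategory C] (A : Mon C) : Prop :=
  ∃ σ : A.X ⟶ A.X ⊗ A.X,
    σ ≫ A.mon.mul = 𝟙 A.X ∧
    A.mon.mul ≫ σ = (A.X ◁ σ) ≫ (α_ A.X A.X A.X).inv ≫ (A.mon.mul ▷ A.X) ∧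
    A.mon.mul ≫ σ = (σ ▷ A.X) ≫ (α_ A.X A.X A.X).hom ≫ (A.X ◁ A.mon.mul)

/-!
Since `p` and `q` are monoid morphisms, the multiplication of `P` is
`(p ⊗ p) ≫ μ_A ≫ i + (q ⊗ q) ≫ μ_B ≫ j`, i.e. `P ≅ A × B` as monoids. A separability section `σ`
of one algebra is transported along maps `g : Y ⟶ X`, `f : X ⟶ Y` to `g ≫ σ ≫ (f ⊗ f)`; the
bimodule conditions survive as soon as `f` intertwines the multiplications up to `g` on the
other tensor factor. Transporting along `(i, p)` turns a separability section of `P` into one of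
`A`, and `p ≫ σ_A ≫ (i ⊗ i) + q ≫ σ_B ≫ (j ⊗ j)` is one of `P`: the mixed terms vanish because
`i ≫ q = 0` and `j ≫ p = 0`.
-/

section Transport

variable {C : Type*} [Category C] [MonoidalCategory C] {X Y : C}
  (μX : X ⊗ X ⟶ X) (μY : Y ⊗ Y ⟶ Y) (σ : X ⟶ X ⊗ X) (f : X ⟶ Y) (g : Y ⟶ X)

theorem transport_comp_mul (hσ : σ ≫ μX = 𝟙 X) (hf : μX ≫ f = (f ⊗ₘ f) ≫ μY) :
    (g ≫ σ ≫ (f ⊗ₘ f)) ≫ μY = g ≫ f := by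
  rw [Category.assoc, Category.assoc, ← hf, reassoc_of% hσ]

theorem whiskerLeft_transport_comp_mul_whiskerRight
    (hσ : μX ≫ σ = (X ◁ σ) ≫ (α_ X X X).inv ≫ (μX ▷ X))
    (hf : (Y ◁ f) ≫ μY = (g ▷ X) ≫ μX ≫ f) :
    (Y ◁ (g ≫ σ ≫ (f ⊗ₘ f))) ≫ (α_ Y Y Y).inv ≫ (μY ▷ Y) = (g ⊗ₘ g) ≫ μX ≫ σ ≫ (f ⊗ₘ f) :=
  calc _ = (Y ◁ g) ≫ (Y ◁ σ) ≫ (α_ Y X X).inv ≫ (((Y ◁ f) ≫ μY) ▷ X) ≫ (Y ◁ f) := by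
          simp only [MonoidalCategory.tensorHom_def, whiskerLeft_comp, comp_whiskerRight, Category.assoc,
            associator_inv_naturality_middle_assoc, associator_inv_naturality_right_assoc,
            whisker_exchange]
    _ = (Y ◁ g) ≫ (Y ◁ σ) ≫ (α_ Y X X).inv ≫ (((g ▷ X) ≫ μX ≫ f) ▷ X) ≫ (Y ◁ f) := by rw [hf]
    _ = (g ⊗ₘ g) ≫ ((X ◁ σ) ≫ (α_ X X X).inv ≫ (μX ▷ X)) ≫ (f ⊗ₘ f) := by
          simp only [MonoidalCategory.tensorHom_def, comp_whiskerRight, Category.assoc,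
            ← associator_inv_naturality_left_assoc, whisker_exchange_assoc]
    _ = _ := by rw [← hσ, Category.assoc]

theorem transport_whiskerRight_comp_whiskerLeft_mul
    (hσ : μX ≫ σ = (σ ▷ X) ≫ (α_ X X X).hom ≫ (X ◁ μX))
    (hf : (f ▷ Y) ≫ μY = (X ◁ g) ≫ μX ≫ f) :
    ((g ≫ σ ≫ (f ⊗ₘ f)) ▷ Y) ≫ (α_ Y Y Y).hom ≫ (Y ◁ μY) = (g ⊗ₘ g) ≫ μX ≫ σ ≫ (f ⊗ₘ f) :=
  calc _ = (g ▷ Y) ≫ (σ ▷ Y) ≫ (α_ X X Y).hom ≫ (f ▷ (X ⊗ Y)) ≫ (Y ◁ ((f ▷ Y) ≫ μY)) := by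
          simp only [MonoidalCategory.tensorHom_def, comp_whiskerRight, whiskerLeft_comp, Category.assoc,
            associator_naturality_middle_assoc, associator_naturality_left_assoc]
    _ = (g ▷ Y) ≫ (σ ▷ Y) ≫ (α_ X X Y).hom ≫ (f ▷ (X ⊗ Y)) ≫ (Y ◁ ((X ◁ g) ≫ μX ≫ f)) := by
          rw [hf]
    _ = (g ⊗ₘ g) ≫ ((σ ▷ X) ≫ (α_ X X X).hom ≫ (X ◁ μX)) ≫ (f ⊗ₘ f) := by
          simp only [MonoidalCategory.tensorHom_def, whiskerLeft_comp, Category.assoc, whisker_exchange_assoc]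
          rw [← whisker_exchange_assoc, associator_naturality_right_assoc]
    _ = _ := by rw [← hσ, Category.assoc]

end Transport

section Retract

variable {C : Type*} [Category C] [MonoidalCategory C]

theorem Mon_.IsSeparable.of_retract {A P : Mon C} (hP : Mon_.IsSeparable P) (p : P ⟶ A)
    (i : A.X ⟶ P.X) (hip : i ≫ p.hom = 𝟙 A.X)
    (hi : A.mon.mul ≫ i = (i ⊗ₘ i) ≫ P.mon.mul) : Mon_.IsSeparable A := by
  obtain ⟨σ, hσ, hσl, hσr⟩ := hP
  have hpl : (A.X ◁ p.hom) ≫ A.mon.mul = (i ▷ P.X) ≫ P.mon.mul ≫ p.hom := by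
    rw [IsMonHom.mul_hom, ← tensorHom_id, tensorHom_comp_tensorHom_assoc, hip, id_tensorHom,
      Category.id_comp]
  have hpr : (p.hom ▷ A.X) ≫ A.mon.mul = (P.X ◁ i) ≫ P.mon.mul ≫ p.hom := by
    rw [IsMonHom.mul_hom, ← id_tensorHom, tensorHom_comp_tensorHom_assoc, hip, tensorHom_id,
      Category.id_comp]
  refine ⟨i ≫ σ ≫ (p.hom ⊗ₘ p.hom), ?_, ?_, ?_⟩
  · rw [transport_comp_mul _ _ _ _ _ hσ (IsMonHom.mul_hom p.hom), hip]
  · rw [whiskerLeft_transport_comp_mul_whiskerRight _ _ _ _ _ hσl hpl, reassoc_of% hi]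
  · rw [transport_whiskerRight_comp_whiskerLeft_mul _ _ _ _ _ hσr hpr, reassoc_of% hi]

end Retract

section Biprod

variable {C : Type*} [Category C] [MonoidalCategory C] [Preadditive C] [MonoidalPreadditive C]
  {A B P : Mon C} (p : P ⟶ A) (q : P ⟶ B) (i : A.X ⟶ P.X) (j : B.X ⟶ P.X)

theorem whiskerLeft_comp_mul_of_biprod (hip : i ≫ p.hom = 𝟙 A.X) (hiq : i ≫ q.hom = 0)
    (htotal : p.hom ≫ i + q.hom ≫ j = 𝟙 P.X) :
    (P.X ◁ i) ≫ P.mon.mul = (p.hom ▷ A.X) ≫ A.mon.mul ≫ i := by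
  rw [← Category.comp_id P.mon.mul, ← htotal]
  simp only [Preadditive.comp_add, IsMonHom.mul_hom_assoc, ← id_tensorHom,
    tensorHom_comp_tensorHom_assoc, Category.id_comp, hip, hiq, MonoidalPreadditive.tensor_zero,
    Limits.zero_comp, add_zero, tensorHom_id]

theorem whiskerRight_comp_mul_of_biprod (hip : i ≫ p.hom = 𝟙 A.X) (hiq : i ≫ q.hom = 0)
    (htotal : p.hom ≫ i + q.hom ≫ j = 𝟙 P.X) :
    (i ▷ P.X) ≫ P.mon.mul = (A.X ◁ p.hom) ≫ A.mon.mul ≫ i := by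
  rw [← Category.comp_id P.mon.mul, ← htotal]
  simp only [Preadditive.comp_add, IsMonHom.mul_hom_assoc, ← tensorHom_id,
    tensorHom_comp_tensorHom_assoc, Category.id_comp, hip, hiq, MonoidalPreadditive.zero_tensor,
    Limits.zero_comp, add_zero, id_tensorHom]

theorem mul_comp_of_biprod (hip : i ≫ p.hom = 𝟙 A.X) (hiq : i ≫ q.hom = 0)
    (htotal : p.hom ≫ i + q.hom ≫ j = 𝟙 P.X) :
    A.mon.mul ≫ i = (i ⊗ₘ i) ≫ P.mon.mul := by
  rw [MonoidalCategory.tensorHom_def, Category.assoc, whiskerLeft_comp_mul_of_biprod p q i j hip hiq htotal,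
    ← comp_whiskerRight_assoc, hip, id_whiskerRight, Category.id_comp]

theorem Mon_.IsSeparable.of_biprod (hA : Mon_.IsSeparable A) (hB : Mon_.IsSeparable B)
    (hip : i ≫ p.hom = 𝟙 A.X) (hjq : j ≫ q.hom = 𝟙 B.X)
    (hiq : i ≫ q.hom = 0) (hjp : j ≫ p.hom = 0)
    (htotal : p.hom ≫ i + q.hom ≫ j = 𝟙 P.X) : Mon_.IsSeparable P := by
  obtain ⟨σA, hσA, hσAl, hσAr⟩ := hA
  obtain ⟨σB, hσB, hσBl, hσBr⟩ := hB
  have htotal' : q.hom ≫ j + p.hom ≫ i = 𝟙 P.X := (add_comm _ _).trans htotal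
  refine ⟨p.hom ≫ σA ≫ (i ⊗ₘ i) + q.hom ≫ σB ≫ (j ⊗ₘ j), ?_, ?_, ?_⟩
  · rw [Preadditive.add_comp,
      transport_comp_mul _ _ _ _ _ hσA (mul_comp_of_biprod p q i j hip hiq htotal),
      transport_comp_mul _ _ _ _ _ hσB (mul_comp_of_biprod q p j i hjq hjp htotal'), htotal]
  · rw [MonoidalPreadditive.whiskerLeft_add, Preadditive.add_comp,
      whiskerLeft_transport_comp_mul_whiskerRight _ _ _ _ _ hσAl
        (whiskerLeft_comp_mul_of_biprod p q i j hip hiq htotal),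
      whiskerLeft_transport_comp_mul_whiskerRight _ _ _ _ _ hσBl
        (whiskerLeft_comp_mul_of_biprod q p j i hjq hjp htotal'),
      Preadditive.comp_add, IsMonHom.mul_hom_assoc p.hom, IsMonHom.mul_hom_assoc q.hom]
  · rw [MonoidalPreadditive.add_whiskerRight, Preadditive.add_comp,
      transport_whiskerRight_comp_whiskerLeft_mul _ _ _ _ _ hσAr
        (whiskerRight_comp_mul_of_biprod p q i j hip hiq htotal),
      transport_whiskerRight_comp_whiskerLeft_mul _ _ _ _ _ hσBr
        (whiskerRight_comp_mul_of_biprod q p j i hjq hjp htotal'),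
      Preadditive.comp_add, IsMonHom.mul_hom_assoc p.hom, IsMonHom.mul_hom_assoc q.hom]

end Biprod

/-- In a preadditive monoidal category, if the underlying object of a monoid object `P`
is a biproduct of the underlying objects of monoid objects `A` and `B`, via morphisms of
monoid objects `p : P ⟶ A` and `q : P ⟶ B`, then `P` is separable if and only if both
`A` and `B` are separable. -/
theorem Mon_.isSeparable_biproduct_iff {C : Type*} [Category C] [MonoidalCategory C]
    [Preadditive C] [MonoidalPreadditive C]
    {A B P : Mon C} (p : P ⟶ A) (q : P ⟶ B) (i : A.X ⟶ P.X) (j : B.X ⟶ P.X)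
    (hip : i ≫ p.hom = 𝟙 A.X) (hjq : j ≫ q.hom = 𝟙 B.X)
    (hiq : i ≫ q.hom = 0) (hjp : j ≫ p.hom = 0)
    (htotal : p.hom ≫ i + q.hom ≫ j = 𝟙 P.X) :
    Mon_.IsSeparable P ↔ Mon_.IsSeparable A ∧ Mon_.IsSeparable B := by
  have hi := mul_comp_of_biprod p q i j hip hiq htotal
  have hj := mul_comp_of_biprod q p j i hjq hjp ((add_comm _ _).trans htotal)
  constructor
  · intro hP
    exact ⟨hP.of_retract p i hip hi, hP.of_retract q j hjq hj⟩
  · rintro ⟨hA, hB⟩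
    exact Mon_.IsSeparable.of_biprod p q i j hA hB hip hjq hiq hjp htotal
end

section
/- Let C be a monoidal category with coequalizers in which tensoring on either side preserves coequalizers, and let A be a separable monoid object in C. Let M be a right A-module object and N a left A-module object, and let M ⊗_A N be their relative tensor product, i.e. the coequalizer of the two canonical maps (M ⊗ A) ⊗ N ⇉ M ⊗ N given by the right action of A on M and (via the associator) the left action of A on N. Then the coequalizer projection π : M ⊗ N ⟶ M ⊗_A N admits a section in C; in particular M ⊗_A N is a retract of M ⊗ N in C. -/
open CategoryTheory MonoidalCategory Limits

/-!
Let `e = σ(1) ∈ A ⊗ A`. Bimodule linearity of `σ` gives `a e¹ ⊗ e² = σ(a) = e¹ ⊗ e² a`,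
and `σ ≫ μ = 𝟙` gives `e¹ e² = 1`. Hence the endomorphism `m ⊗ n ↦ m e¹ ⊗ e² n` of `M ⊗ N`
is balanced, so it factors through `π : M ⊗ N ⟶ M ⊗_A N`, and
`π (m e¹ ⊗ e² n) = π (m ⊗ e¹ e² n) = π (m ⊗ n)` shows that the factorization is a section
of `π`.
-/

namespace CategoryTheory.Mon

variable {C : Type*} [Category C] [MonoidalCategory C] {A : Mon C}

theorem eq_whiskerLeft_one_comp_of_leftLinear {P : C} (a : A.X ⊗ P ⟶ P) (f : A.X ⟶ P)
    (hf : A.mon.mul ≫ f = (A.X ◁ f) ≫ a) :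
    f = (ρ_ A.X).inv ≫ (A.X ◁ (A.mon.one ≫ f)) ≫ a := by
  calc f = (ρ_ A.X).inv ≫ ((A.X ◁ A.mon.one) ≫ A.mon.mul) ≫ f := by simp
    _ = _ := by rw [Category.assoc, hf, MonoidalCategory.whiskerLeft_comp_assoc]

theorem eq_whiskerRight_one_comp_of_rightLinear {P : C} (a : P ⊗ A.X ⟶ P) (f : A.X ⟶ P)
    (hf : A.mon.mul ≫ f = (f ▷ A.X) ≫ a) :
    f = (λ_ A.X).inv ≫ ((A.mon.one ≫ f) ▷ A.X) ≫ a := by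
  calc f = (λ_ A.X).inv ≫ ((A.mon.one ▷ A.X) ≫ A.mon.mul) ≫ f := by simp
    _ = _ := by rw [Category.assoc, hf, comp_whiskerRight_assoc]

end CategoryTheory.Mon

namespace Mon_.IsSeparable

variable {C : Type*} [Category C] [MonoidalCategory C] {A : Mon C} (σ : A.X ⟶ A.X ⊗ A.X)

/-- `n ↦ σ(1)¹ ⊗ σ(1)² n` -/
def leftSplitting {N : C} (l : A.X ⊗ N ⟶ N) : N ⟶ A.X ⊗ N :=
  (λ_ N).inv ≫ ((A.mon.one ≫ σ) ▷ N) ≫ (α_ A.X A.X N).hom ≫ (A.X ◁ l)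

/-- `m ↦ m σ(1)¹ ⊗ σ(1)²` -/
def rightSplitting {M : C} (r : M ⊗ A.X ⟶ M) : M ⟶ M ⊗ A.X :=
  (ρ_ M).inv ≫ (M ◁ (A.mon.one ≫ σ)) ≫ (α_ M A.X A.X).inv ≫ (r ▷ A.X)

/-- `m ⊗ n ↦ m σ(1)¹ ⊗ σ(1)² n` -/
def tensorSplitting {M N : C} (r : M ⊗ A.X ⟶ M) (l : A.X ⊗ N ⟶ N) : M ⊗ N ⟶ M ⊗ N :=
  (M ◁ leftSplitting σ l) ≫ (α_ M A.X N).inv ≫ (r ▷ N)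

variable {σ}

theorem leftSplitting_comp_act {N : C} {l : A.X ⊗ N ⟶ N} (hσ : σ ≫ A.mon.mul = 𝟙 A.X)
    (hl_one : (A.mon.one ▷ N) ≫ l = (λ_ N).hom)
    (hl_assoc : (A.mon.mul ▷ N) ≫ l = (α_ A.X A.X N).hom ≫ (A.X ◁ l) ≫ l) :
    leftSplitting σ l ≫ l = 𝟙 N := by
  simp only [leftSplitting, Category.assoc, ← hl_assoc, ← comp_whiskerRight_assoc, hσ,
    Category.comp_id, hl_one, Iso.inv_hom_id]

theorem act_comp_leftSplitting {N : C} {l : A.X ⊗ N ⟶ N}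
    (hσ : A.mon.mul ≫ σ = (σ ▷ A.X) ≫ (α_ A.X A.X A.X).hom ≫ (A.X ◁ A.mon.mul))
    (hl_assoc : (A.mon.mul ▷ N) ≫ l = (α_ A.X A.X N).hom ≫ (A.X ◁ l) ≫ l) :
    l ≫ leftSplitting σ l = (σ ▷ N) ≫ (α_ A.X A.X N).hom ≫ (A.X ◁ l) := by
  conv_rhs => rw [Mon.eq_whiskerRight_one_comp_of_rightLinear _ σ hσ]
  simp only [leftSplitting]
  generalize A.mon.one ≫ σ = e
  simp only [comp_whiskerRight, Category.assoc]
  rw [associator_naturality_middle_assoc, ← MonoidalCategory.whiskerLeft_comp, hl_assoc,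
    leftUnitor_inv_naturality_assoc, whisker_exchange_assoc, associator_naturality_right_assoc]
  simp only [MonoidalCategory.whiskerLeft_comp]
  monoidal

theorem act_comp_rightSplitting {M : C} {r : M ⊗ A.X ⟶ M}
    (hσ : A.mon.mul ≫ σ = (A.X ◁ σ) ≫ (α_ A.X A.X A.X).inv ≫ (A.mon.mul ▷ A.X))
    (hr_assoc : (M ◁ A.mon.mul) ≫ r = (α_ M A.X A.X).inv ≫ (r ▷ A.X) ≫ r) :
    r ≫ rightSplitting σ r = (M ◁ σ) ≫ (α_ M A.X A.X).inv ≫ (r ▷ A.X) := by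
  conv_rhs => rw [Mon.eq_whiskerLeft_one_comp_of_leftLinear _ σ hσ]
  simp only [rightSplitting]
  generalize A.mon.one ≫ σ = e
  simp only [MonoidalCategory.whiskerLeft_comp, Category.assoc]
  rw [associator_inv_naturality_middle_assoc, ← comp_whiskerRight, hr_assoc,
    rightUnitor_inv_naturality_assoc, ← whisker_exchange_assoc,
    associator_inv_naturality_left_assoc]
  simp only [comp_whiskerRight]
  monoidal

theorem rightSplitting_whiskerRight_comp {M N : C} (r : M ⊗ A.X ⟶ M) (l : A.X ⊗ N ⟶ N) :
    (rightSplitting σ r ▷ N) ≫ (α_ M A.X N).hom ≫ (M ◁ l) = tensorSplitting σ r l := by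
  simp only [rightSplitting, tensorSplitting, leftSplitting, comp_whiskerRight,
    MonoidalCategory.whiskerLeft_comp, Category.assoc]
  rw [associator_naturality_left_assoc, ← whisker_exchange, associator_inv_naturality_right_assoc]
  monoidal

theorem tensorSplitting_balanced {M N : C} {r : M ⊗ A.X ⟶ M} {l : A.X ⊗ N ⟶ N}
    (hσ_left : A.mon.mul ≫ σ = (A.X ◁ σ) ≫ (α_ A.X A.X A.X).inv ≫ (A.mon.mul ▷ A.X))
    (hσ_right : A.mon.mul ≫ σ = (σ ▷ A.X) ≫ (α_ A.X A.X A.X).hom ≫ (A.X ◁ A.mon.mul))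
    (hr_assoc : (M ◁ A.mon.mul) ≫ r = (α_ M A.X A.X).inv ≫ (r ▷ A.X) ≫ r)
    (hl_assoc : (A.mon.mul ▷ N) ≫ l = (α_ A.X A.X N).hom ≫ (A.X ◁ l) ≫ l) :
    (r ▷ N) ≫ tensorSplitting σ r l =
      ((α_ M A.X N).hom ≫ (M ◁ l)) ≫ tensorSplitting σ r l :=
  calc (r ▷ N) ≫ tensorSplitting σ r l
      = ((r ≫ rightSplitting σ r) ▷ N) ≫ (α_ M A.X N).hom ≫ (M ◁ l) := by
        rw [← rightSplitting_whiskerRight_comp, comp_whiskerRight_assoc]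
    _ = (((M ◁ σ) ≫ (α_ M A.X A.X).inv ≫ (r ▷ A.X)) ▷ N) ≫
          (α_ M A.X N).hom ≫ (M ◁ l) := by
        rw [act_comp_rightSplitting hσ_left hr_assoc]
    _ = (α_ M A.X N).hom ≫ (M ◁ ((σ ▷ N) ≫ (α_ A.X A.X N).hom ≫ (A.X ◁ l))) ≫
          (α_ M A.X N).inv ≫ (r ▷ N) := by
        simp only [comp_whiskerRight, MonoidalCategory.whiskerLeft_comp, Category.assoc]
        rw [associator_naturality_left_assoc, ← whisker_exchange,
          associator_inv_naturality_right_assoc]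
        monoidal
    _ = ((α_ M A.X N).hom ≫ (M ◁ l)) ≫ tensorSplitting σ r l := by
        rw [← act_comp_leftSplitting hσ_right hl_assoc]
        simp only [tensorSplitting, MonoidalCategory.whiskerLeft_comp, Category.assoc]

theorem tensorSplitting_comp_of_balanced {M N X : C} {r : M ⊗ A.X ⟶ M}
    {l : A.X ⊗ N ⟶ N} (hσ : σ ≫ A.mon.mul = 𝟙 A.X)
    (hl_one : (A.mon.one ▷ N) ≫ l = (λ_ N).hom)
    (hl_assoc : (A.mon.mul ▷ N) ≫ l = (α_ A.X A.X N).hom ≫ (A.X ◁ l) ≫ l)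
    {f : M ⊗ N ⟶ X} (hf : (r ▷ N) ≫ f = ((α_ M A.X N).hom ≫ (M ◁ l)) ≫ f) :
    tensorSplitting σ r l ≫ f = f := by
  rw [tensorSplitting, Category.assoc, Category.assoc, hf, Category.assoc,
    Iso.inv_hom_id_assoc, ← MonoidalCategory.whiskerLeft_comp_assoc,
    leftSplitting_comp_act hσ hl_one hl_assoc, MonoidalCategory.whiskerLeft_id, Category.id_comp]

end Mon_.IsSeparable

/-- Over a separable monoid object `A`, the relative tensor product `M ⊗_A N` of a right
`A`-module object `M` (action `r`) and a left `A`-module object `N` (action `l`), i.e.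
the coequalizer of the two canonical maps `(M ⊗ A) ⊗ N ⇉ M ⊗ N`, is a retract of
`M ⊗ N`: the coequalizer projection admits a section in `C`. -/
theorem Mon_.IsSeparable.relativeTensor_retract {C : Type*} [Category C] [MonoidalCategory C]
    [HasCoequalizers C]
    [∀ X : C, PreservesColimitsOfSize.{0, 0} (tensorLeft X)]
    [∀ X : C, PreservesColimitsOfSize.{0, 0} (tensorRight X)]
    {A : Mon C} (hA : Mon_.IsSeparable A)
    (M N : C) (r : M ⊗ A.X ⟶ M) (l : A.X ⊗ N ⟶ N)
    (hr_one : (M ◁ A.mon.one) ≫ r = (ρ_ M).hom)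
    (hr_assoc : (M ◁ A.mon.mul) ≫ r = (α_ M A.X A.X).inv ≫ (r ▷ A.X) ≫ r)
    (hl_one : (A.mon.one ▷ N) ≫ l = (λ_ N).hom)
    (hl_assoc : (A.mon.mul ▷ N) ≫ l = (α_ A.X A.X N).hom ≫ (A.X ◁ l) ≫ l) :
    ∃ s : coequalizer (r ▷ N) ((α_ M A.X N).hom ≫ (M ◁ l)) ⟶ M ⊗ N,
      s ≫ coequalizer.π (r ▷ N) ((α_ M A.X N).hom ≫ (M ◁ l)) =
        𝟙 (coequalizer (r ▷ N) ((α_ M A.X N).hom ≫ (M ◁ l))) := by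
  obtain ⟨σ, hσ_sect, hσ_left, hσ_right⟩ := hA
  refine ⟨coequalizer.desc (tensorSplitting σ r l)
    (tensorSplitting_balanced hσ_left hσ_right hr_assoc hl_assoc), ?_⟩
  ext
  rw [coequalizer.π_desc_assoc,
    tensorSplitting_comp_of_balanced hσ_sect hl_one hl_assoc (coequalizer.condition _ _),
    Category.comp_id]
end
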